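/- arXiv:math/9909197 — 5 statements merged into one kernel-verified Lean document; each statement's English description precedes it below -/
import Mathlib

section
/- Let μ be a doubling Radon measure on ℝ^{n+1} which is asymptotically optimally doubling. Suppose Q_i ∈ spt μ with Q_i → Q ∈ spt μ, λ_i > 0 with λ_i → 0, and the rescaled measures μ_{λ_i,Q_i} converge weakly to a nonzero Radon measure ν. Then ν is a uniform measure with exponent n: for every X ∈ spt ν and every r > 0, ν(B(r,X)) = r^n. -/
open MeasureTheory Metric Filter
open scoped ENNReal Topology

noncomputable section

/-- The support of a measure on ℝ^{n+1}: points all of whose balls have positive measure. -/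
def msupp {n : ℕ} (μ : Measure (EuclideanSpace ℝ (Fin (n+1)))) :
    Set (EuclideanSpace ℝ (Fin (n+1))) :=
  {x | ∀ r : ℝ, 0 < r → 0 < μ (ball x r)}

/-- The rescaled measure `μ_{r,Q}(A) = μ(rA + Q) / μ(B(r,Q))`. -/
def resc {n : ℕ} (μ : Measure (EuclideanSpace ℝ (Fin (n+1)))) (r : ℝ)
    (Q : EuclideanSpace ℝ (Fin (n+1))) : Measure (EuclideanSpace ℝ (Fin (n+1))) :=
  (μ (ball Q r))⁻¹ • Measure.map (fun y => r⁻¹ • (y - Q)) μ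

/-
By the scaling formula `μ_{λ,Q}(B(c,X)) = μ(B(λc, Q + λX)) / μ(B(λ,Q))`, it suffices to show that
these ratios tend to `c^n`: bump functions squeeze `ν(B(r,X))` between limits of `μ_{λ_i,Q_i}` on
balls of radii slightly below and above `r`. Since `X ∈ spt ν`, the balls `B(λt, Q + λX)`
eventually carry `μ`-mass, so they contain points `Z ∈ spt μ`. Comparing balls about `Z` and `Q`
through a large radius `λT` with `T ≫ |Z - Q|/λ` bounds the ratio, up to factors `(1 ± t)^n`, by a
product of two ratios of concentric balls, to which asymptotic optimal doubling applies.
-/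

open Set

lemma tendsto_of_forall_eventually_bounds {ι τ : Type*} {l : Filter ι} {p : Filter τ} [p.NeBot]
    {x : ι → ℝ} {L : ℝ} {U V : τ → ℝ} (hU : Tendsto U p (𝓝 L)) (hV : Tendsto V p (𝓝 L))
    (h : ∀ᶠ t in p, (∃ u : ι → ℝ, Tendsto u l (𝓝 (U t)) ∧ ∀ᶠ i in l, x i ≤ u i) ∧
      (∃ v : ι → ℝ, Tendsto v l (𝓝 (V t)) ∧ ∀ᶠ i in l, v i ≤ x i)) :
    Tendsto x l (𝓝 L) := by
  refine tendsto_order.2 ⟨fun a ha => ?_, fun a ha => ?_⟩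
  · obtain ⟨t, hVt, -, v, hv, hvx⟩ := ((hV.eventually (lt_mem_nhds ha)).and h).exists
    filter_upwards [hv.eventually (lt_mem_nhds hVt), hvx] with i h₁ h₂ using h₁.trans_le h₂
  · obtain ⟨t, hUt, ⟨u, hu, hxu⟩, -⟩ := ((hU.eventually (gt_mem_nhds ha)).and h).exists
    filter_upwards [hu.eventually (gt_mem_nhds hUt), hxu] with i h₁ h₂ using h₂.trans_lt h₁

section Vague

variable {E : Type*} [MetricSpace E] [ProperSpace E] [MeasurableSpace E] [OpensMeasurableSpace E]

def TendstoVaguely {ι : Type*} (m : ι → Measure E) (l : Filter ι) (ν : Measure E) : Prop :=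
  ∀ φ : E → ℝ, Continuous φ → HasCompactSupport φ →
    Tendsto (fun i => ∫ y, φ y ∂m i) l (𝓝 (∫ y, φ y ∂ν))

lemma exists_bump_integral_mem (X : E) {a b : ℝ} (hab : a < b) :
    ∃ φ : E → ℝ, Continuous φ ∧ HasCompactSupport φ ∧
      ∀ (m : Measure E) [IsFiniteMeasureOnCompacts m],
        m.real (closedBall X a) ≤ ∫ y, φ y ∂m ∧ ∫ y, φ y ∂m ≤ m.real (ball X b) := by
  obtain ⟨φ, hφa, hφb, hφc, hφ01⟩ := exists_continuous_one_zero_of_isCompact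
    (isCompact_closedBall X a) (isOpen_ball (x := X) (ε := b)).isClosed_compl
    (disjoint_compl_right_iff_subset.2 (closedBall_subset_ball hab))
  refine ⟨φ, φ.continuous, hφc, fun m _ => ⟨?_, ?_⟩⟩
  · rw [← integral_indicator_one measurableSet_closedBall]
    refine integral_mono_of_nonneg (.of_forall fun y => ?_)
      (φ.continuous.integrable_of_hasCompactSupport hφc) (.of_forall fun y => ?_)
    · exact indicator_nonneg (fun _ _ => zero_le_one) y
    · by_cases hy : y ∈ closedBall X a
      · simp [hy, hφa hy]
      · simpa [hy] using (hφ01 y).1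
  · rw [← integral_indicator_one measurableSet_ball]
    refine integral_mono_of_nonneg (.of_forall fun y => (hφ01 y).1)
      ((integrable_indicator_iff measurableSet_ball).2 (integrableOn_const measure_ball_lt_top.ne))
      (.of_forall fun y => ?_)
    by_cases hy : y ∈ ball X b
    · simpa [hy] using (hφ01 y).2
    · simp [hy, hφb hy]

variable {ι : Type*} {l : Filter ι} {m : ι → Measure E} [∀ i, IsFiniteMeasureOnCompacts (m i)]
  {ν : Measure E} [IsFiniteMeasureOnCompacts ν] {X : E} {a b L : ℝ}

lemma measureReal_closedBall_le_of_tendstoVaguely [l.NeBot]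
    (hmν : TendstoVaguely m l ν) (hab : a < b)
    (hL : Tendsto (fun i => (m i).real (ball X b)) l (𝓝 L)) :
    ν.real (closedBall X a) ≤ L := by
  obtain ⟨φ, hφ, hφc, hφm⟩ := exists_bump_integral_mem X hab
  exact (hφm ν).1.trans <| le_of_tendsto_of_tendsto' (hmν φ hφ hφc) hL fun i => (hφm (m i)).2

lemma le_measureReal_ball_of_tendstoVaguely [l.NeBot]
    (hmν : TendstoVaguely m l ν) (hab : a < b)
    (hL : Tendsto (fun i => (m i).real (ball X a)) l (𝓝 L)) :
    L ≤ ν.real (ball X b) := by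
  obtain ⟨φ, hφ, hφc, hφm⟩ := exists_bump_integral_mem X hab
  refine le_trans (le_of_tendsto_of_tendsto' hL (hmν φ hφ hφc) fun i => ?_) (hφm ν).2
  exact (measureReal_mono ball_subset_closedBall measure_closedBall_lt_top.ne).trans (hφm (m i)).1

lemma eventually_measure_ball_pos_of_tendstoVaguely
    (hmν : TendstoVaguely m l ν) (hab : a < b) (hX : 0 < ν (ball X a)) :
    ∀ᶠ i in l, 0 < m i (ball X b) := by
  obtain ⟨φ, hφ, hφc, hφm⟩ := exists_bump_integral_mem X hab
  have hpos : 0 < ∫ y, φ y ∂ν := by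
    refine lt_of_lt_of_le ?_ (hφm ν).1
    exact ENNReal.toReal_pos (hX.trans_le (measure_mono ball_subset_closedBall)).ne'
      measure_closedBall_lt_top.ne
  filter_upwards [(hmν φ hφ hφc).eventually (eventually_gt_nhds hpos)] with i hi
  exact (ENNReal.toReal_pos_iff.1 (hi.trans_le (hφm (m i)).2)).1

lemma measureReal_ball_eq_of_tendstoVaguely [l.NeBot] (hmν : TendstoVaguely m l ν) {f : ℝ → ℝ}
    {r : ℝ} (hr : 0 < r) (hf : ContinuousAt f r)
    (hball : ∀ c, 0 < c → Tendsto (fun i => (m i).real (ball X c)) l (𝓝 (f c))) :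
    ν.real (ball X r) = f r := by
  apply le_antisymm
  · refine ge_of_tendsto (hf.tendsto.mono_left nhdsWithin_le_nhds : Tendsto f (𝓝[>] r) _) ?_
    filter_upwards [self_mem_nhdsWithin] with b (hb : r < b)
    exact (measureReal_mono ball_subset_closedBall measure_closedBall_lt_top.ne).trans
      (measureReal_closedBall_le_of_tendstoVaguely hmν hb (hball b (hr.trans hb)))
  · refine le_of_tendsto (hf.tendsto.mono_left nhdsWithin_le_nhds : Tendsto f (𝓝[<] r) _) ?_
    filter_upwards [Ioo_mem_nhdsLT hr] with a ha
    exact le_measureReal_ball_of_tendstoVaguely hmν ha.2 (hball a ha.1)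

end Vague

def IsAsymptoticallyOptimallyDoubling {n : ℕ} (μ : Measure (EuclideanSpace ℝ (Fin (n+1)))) : Prop :=
  ∀ K : Set (EuclideanSpace ℝ (Fin (n+1))), IsCompact K →
    (K ∩ msupp μ).Nonempty → ∀ τ : ℝ, 0 < τ → τ ≤ 1 → ∀ ε : ℝ, 0 < ε →
      ∃ R : ℝ, 0 < R ∧ ∀ r : ℝ, 0 < r → r ≤ R → ∀ Q' ∈ K ∩ msupp μ,
        |(μ (ball Q' (τ * r))).toReal / (μ (ball Q' r)).toReal - τ ^ n| ≤ ε

section Blowup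

variable {n : ℕ} {μ : Measure (EuclideanSpace ℝ (Fin (n+1)))}

lemma exists_mem_msupp_of_measure_ball_pos {p : EuclideanSpace ℝ (Fin (n+1))} {ρ : ℝ}
    (h : 0 < μ (ball p ρ)) : ∃ z ∈ msupp μ, dist z p < ρ := by
  by_contra! hc
  refine h.ne' (measure_null_of_locally_null _ fun z hz => ?_)
  have hz' : ¬ ∀ r : ℝ, 0 < r → 0 < μ (ball z r) := fun h' => (hc z h').not_gt hz
  push Not at hz'
  obtain ⟨r, hr, hr0⟩ := hz'
  exact ⟨ball z r, mem_nhdsWithin_of_mem_nhds (ball_mem_nhds z hr), nonpos_iff_eq_zero.1 hr0⟩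

lemma resc_real_ball {r : ℝ} (hr : 0 < r) (Q X : EuclideanSpace ℝ (Fin (n+1))) (c : ℝ) :
    (resc μ r Q).real (ball X c) = μ.real (ball (Q + r • X) (r * c)) / μ.real (ball Q r) := by
  have hpre : (fun y => r⁻¹ • (y - Q)) ⁻¹' ball X c = ball (Q + r • X) (r * c) := by
    ext y
    have : r⁻¹ • (y - Q) - X = r⁻¹ • (y - (Q + r • X)) := by
      rw [sub_add_eq_sub_sub, smul_sub _ (y - Q), inv_smul_smul₀ hr.ne']
    simp only [mem_preimage, mem_ball, dist_eq_norm, this, norm_smul, Real.norm_eq_abs,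
      abs_of_pos (inv_pos.2 hr), inv_mul_lt_iff₀ hr]
  rw [Measure.real, resc, Measure.smul_apply, Measure.map_apply (by fun_prop) measurableSet_ball,
    hpre, smul_eq_mul, ENNReal.toReal_mul, ENNReal.toReal_inv, inv_mul_eq_div]
  rfl

lemma IsAsymptoticallyOptimallyDoubling.tendsto_measureReal_ball_div
    (hμ : IsAsymptoticallyOptimallyDoubling μ) {Z : ℕ → EuclideanSpace ℝ (Fin (n+1))}
    {Z₀ : EuclideanSpace ℝ (Fin (n+1))} (hZ : Tendsto Z atTop (𝓝 Z₀))
    (hZμ : ∀ᶠ i in atTop, Z i ∈ msupp μ) {lam : ℕ → ℝ} (hlampos : ∀ i, 0 < lam i)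
    (hlam : Tendsto lam atTop (𝓝 0)) {s t : ℝ} (hs : 0 < s) (hst : s ≤ t) :
    Tendsto (fun i => μ.real (ball (Z i) (lam i * s)) / μ.real (ball (Z i) (lam i * t))) atTop
      (𝓝 ((s / t) ^ n)) := by
  have ht : 0 < t := hs.trans_le hst
  have hK : ∀ᶠ i in atTop, Z i ∈ closedBall Z₀ 1 ∩ msupp μ :=
    (hZ.eventually (closedBall_mem_nhds _ one_pos)).and hZμ
  refine Metric.tendsto_nhds.2 fun ε hε => ?_
  obtain ⟨i₀, hi₀⟩ := hK.exists
  obtain ⟨R, hR, hRε⟩ := hμ _ (isCompact_closedBall _ _) ⟨Z i₀, hi₀⟩ (s / t) (div_pos hs ht)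
    ((div_le_one ht).2 hst) (ε / 2) (half_pos hε)
  have hsmall : ∀ᶠ i in atTop, lam i * t ≤ R :=
    (by simpa using hlam.mul_const t : Tendsto (fun i => lam i * t) atTop (𝓝 0)).eventually
      (eventually_le_nhds hR)
  filter_upwards [hK, hsmall] with i hi hiR
  have := hRε (lam i * t) (mul_pos (hlampos i) ht) hiR (Z i) hi
  rw [show s / t * (lam i * t) = lam i * s by field_simp] at this
  exact this.trans_lt (half_lt_self hε)

variable [IsLocallyFiniteMeasure μ]

lemma measureReal_ball_pos_of_mem_msupp
    {x : EuclideanSpace ℝ (Fin (n+1))} (hx : x ∈ msupp μ) {r : ℝ} (hr : 0 < r) :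
    0 < μ.real (ball x r) :=
  ENNReal.toReal_pos (hx r hr).ne' measure_ball_lt_top.ne

lemma isFiniteMeasureOnCompacts_resc {r : ℝ} (hr : 0 < r)
    {Q : EuclideanSpace ℝ (Fin (n+1))} (hQ : μ (ball Q r) ≠ 0) :
    IsFiniteMeasureOnCompacts (resc μ r Q) :=
  have : IsFiniteMeasureOnCompacts (Measure.map (fun y => r⁻¹ • (y - Q)) μ) :=
    Measure.IsFiniteMeasureOnCompacts.map μ
      ((Homeomorph.subRight Q).trans (Homeomorph.smulOfNeZero r⁻¹ (inv_ne_zero hr.ne')))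
  IsFiniteMeasureOnCompacts.smul _ (ENNReal.inv_ne_top.2 hQ)

lemma exists_seq_mem_msupp_dist_lt {ν : Measure (EuclideanSpace ℝ (Fin (n+1)))}
    [IsLocallyFiniteMeasure ν] {Q : ℕ → EuclideanSpace ℝ (Fin (n+1))} (hQ : ∀ i, Q i ∈ msupp μ)
    {lam : ℕ → ℝ} (hlampos : ∀ i, 0 < lam i)
    (hweak : TendstoVaguely (fun i => resc μ (lam i) (Q i)) atTop ν)
    {X : EuclideanSpace ℝ (Fin (n+1))} (hX : X ∈ msupp ν) {t : ℝ} (ht : 0 < t) :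
    ∃ Z : ℕ → EuclideanSpace ℝ (Fin (n+1)),
      ∀ᶠ i in atTop, Z i ∈ msupp μ ∧ dist (Z i) (Q i + lam i • X) < lam i * t := by
  have (i : ℕ) : IsFiniteMeasureOnCompacts (resc μ (lam i) (Q i)) :=
    isFiniteMeasureOnCompacts_resc (hlampos i) (hQ i _ (hlampos i)).ne'
  refine Eventually.choice
    (r := fun i z => z ∈ msupp μ ∧ dist z (Q i + lam i • X) < lam i * t) ?_
  filter_upwards [eventually_measure_ball_pos_of_tendstoVaguely hweak (half_lt_self ht)
    (hX _ (half_pos ht))] with i hi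
  have hpos := ENNReal.toReal_pos hi.ne' measure_ball_lt_top.ne
  rw [← Measure.real, resc_real_ball (hlampos i),
    div_pos_iff_of_pos_right (measureReal_ball_pos_of_mem_msupp (hQ i) (hlampos i))] at hpos
  exact exists_mem_msupp_of_measure_ball_pos (ENNReal.toReal_pos_iff.1 hpos).1

lemma resc_real_ball_le {l c t M T : ℝ} (hl : 0 < l) (hT : 0 < T)
    {q z X : EuclideanSpace ℝ (Fin (n+1))} (hq : q ∈ msupp μ) (hz : z ∈ msupp μ)
    (hzX : dist z (q + l • X) ≤ l * t) (hzq : dist z q ≤ l * M) :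
    (resc μ l q).real (ball X c) ≤ μ.real (ball z (l * (c + t))) / μ.real (ball z (l * T)) /
      (μ.real (ball q l) / μ.real (ball q (l * (T + M)))) := by
  have hE : μ.real (ball (q + l • X) (l * c)) ≤ μ.real (ball z (l * (c + t))) :=
    measureReal_mono (ball_subset_ball' (by rw [dist_comm]; linarith)) measure_ball_lt_top.ne
  have hB : μ.real (ball z (l * T)) ≤ μ.real (ball q (l * (T + M))) :=
    measureReal_mono (ball_subset_ball' (by linarith)) measure_ball_lt_top.ne
  have hBpos := measureReal_ball_pos_of_mem_msupp hz (mul_pos hl hT)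
  have hDpos := measureReal_ball_pos_of_mem_msupp hq hl
  rw [resc_real_ball hl, div_div_eq_mul_div]
  calc μ.real (ball (q + l • X) (l * c)) / μ.real (ball q l)
      ≤ μ.real (ball z (l * (c + t))) / μ.real (ball z (l * T)) * μ.real (ball z (l * T)) /
          μ.real (ball q l) := by rw [div_mul_cancel₀ _ hBpos.ne']; gcongr
    _ ≤ _ := by gcongr

lemma le_resc_real_ball {l c t M T : ℝ} (hl : 0 < l) (hT : 0 < T)
    {q z X : EuclideanSpace ℝ (Fin (n+1))} (hq : q ∈ msupp μ)
    (hzX : dist z (q + l • X) ≤ l * t) (hzq : dist z q ≤ l * M) :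
    μ.real (ball z (l * (c - t))) / μ.real (ball z (l * (T + M))) /
      (μ.real (ball q l) / μ.real (ball q (l * T))) ≤ (resc μ l q).real (ball X c) := by
  have hE : μ.real (ball z (l * (c - t))) ≤ μ.real (ball (q + l • X) (l * c)) :=
    measureReal_mono (ball_subset_ball' (by linarith)) measure_ball_lt_top.ne
  have hC : μ.real (ball q (l * T)) ≤ μ.real (ball z (l * (T + M))) :=
    measureReal_mono (ball_subset_ball' (by rw [dist_comm]; linarith)) measure_ball_lt_top.ne
  have hCpos := measureReal_ball_pos_of_mem_msupp hq (mul_pos hl hT)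
  have hDpos := measureReal_ball_pos_of_mem_msupp hq hl
  rw [resc_real_ball hl, div_div_eq_mul_div]
  calc μ.real (ball z (l * (c - t))) / μ.real (ball z (l * (T + M))) * μ.real (ball q (l * T)) /
        μ.real (ball q l)
      ≤ μ.real (ball z (l * (c - t))) / μ.real (ball q (l * T)) * μ.real (ball q (l * T)) /
          μ.real (ball q l) := by gcongr
    _ ≤ _ := by rw [div_mul_cancel₀ _ hCpos.ne']; gcongr

lemma tendsto_resc_real_ball (hμ : IsAsymptoticallyOptimallyDoubling μ)
    {ν : Measure (EuclideanSpace ℝ (Fin (n+1)))} [IsLocallyFiniteMeasure ν]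
    {Q : ℕ → EuclideanSpace ℝ (Fin (n+1))} (hQ : ∀ i, Q i ∈ msupp μ)
    {Q₀ : EuclideanSpace ℝ (Fin (n+1))} (hQlim : Tendsto Q atTop (𝓝 Q₀))
    {lam : ℕ → ℝ} (hlampos : ∀ i, 0 < lam i) (hlam : Tendsto lam atTop (𝓝 0))
    (hweak : TendstoVaguely (fun i => resc μ (lam i) (Q i)) atTop ν)
    {X : EuclideanSpace ℝ (Fin (n+1))} (hX : X ∈ msupp ν) {c : ℝ} (hc : 0 < c) :
    Tendsto (fun i => (resc μ (lam i) (Q i)).real (ball X c)) atTop (𝓝 (c ^ n)) := by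
  set M := ‖X‖ + c + 1 with hM
  refine tendsto_of_forall_eventually_bounds (p := 𝓝[>] 0)
    (U := fun t => ((c + t) * (1 + t)) ^ n) (V := fun t => ((c - t) / (1 + t)) ^ n) ?_ ?_ ?_
  · have : ContinuousAt (fun t : ℝ => ((c + t) * (1 + t)) ^ n) 0 := by fun_prop
    simpa using this.tendsto.mono_left nhdsWithin_le_nhds
  · have : ContinuousAt (fun t : ℝ => ((c - t) / (1 + t)) ^ n) 0 := by fun_prop (disch := norm_num)
    simpa using this.tendsto.mono_left nhdsWithin_le_nhds
  filter_upwards [Ioo_mem_nhdsGT (lt_min one_pos hc)] with t ⟨ht0, ht⟩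
  have ht1 : t < 1 := ht.trans_le (min_le_left _ _)
  have htc : t < c := ht.trans_le (min_le_right _ _)
  obtain ⟨Z, hZ⟩ := exists_seq_mem_msupp_dist_lt hQ hlampos hweak hX ht0
  have hZQ : ∀ᶠ i in atTop, dist (Z i) (Q i) ≤ lam i * M := by
    filter_upwards [hZ] with i hi
    have := dist_triangle (Z i) (Q i + lam i • X) (Q i)
    rw [dist_self_add_left, norm_smul, Real.norm_of_nonneg (hlampos i).le] at this
    nlinarith [hlampos i]
  have hZlim : Tendsto Z atTop (𝓝 Q₀) := by
    refine hQlim.congr_dist (squeeze_zero' (.of_forall fun _ => dist_nonneg) ?_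
      (by simpa using hlam.mul_const M))
    filter_upwards [hZQ] with i hi using dist_comm (Q i) (Z i) ▸ hi
  have hZμ : ∀ᶠ i in atTop, Z i ∈ msupp μ := hZ.mono fun i hi => hi.1
  have hQμ : ∀ᶠ i in atTop, Q i ∈ msupp μ := .of_forall hQ
  have hcM : c + 1 ≤ M := by rw [hM]; linarith [norm_nonneg X]
  have hMpos : 0 < M := by linarith
  -- At scale `λT` the offset `|Z - Q| ≤ λM` between the centres costs only `(T + M)/T = 1 + t`.
  set T := M / t with hT
  have hMT : M ≤ T := le_div_self (by positivity) ht0 ht1.le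
  have hTpos : 0 < T := by positivity
  constructor
  · have hlim : ((c + t) / T) ^ n / (1 / (T + M)) ^ n = ((c + t) * (1 + t)) ^ n := by
      rw [← div_pow, hT]
      field_simp
    refine ⟨_, hlim ▸ (hμ.tendsto_measureReal_ball_div hZlim hZμ hlampos hlam (by linarith)
      (by linarith)).div (hμ.tendsto_measureReal_ball_div hQlim hQμ hlampos hlam one_pos
      (by linarith)) (by positivity), ?_⟩
    filter_upwards [hZ, hZQ] with i hi hiq
    simpa using resc_real_ball_le (hlampos i) hTpos (hQ i) hi.1 hi.2.le hiq
  · have hlim : ((c - t) / (T + M)) ^ n / (1 / T) ^ n = ((c - t) / (1 + t)) ^ n := by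
      rw [← div_pow, hT]
      field_simp
    refine ⟨_, hlim ▸ (hμ.tendsto_measureReal_ball_div hZlim hZμ hlampos hlam (by linarith)
      (by linarith)).div (hμ.tendsto_measureReal_ball_div hQlim hQμ hlampos hlam one_pos
      (by linarith)) (by positivity), ?_⟩
    filter_upwards [hZ, hZQ] with i hi hiq
    simpa using le_resc_real_ball (hlampos i) hTpos (hQ i) hi.2.le hiq

end Blowup

theorem stmt2_general (n : ℕ) (μ ν : Measure (EuclideanSpace ℝ (Fin (n+1))))
    [IsLocallyFiniteMeasure μ] [IsLocallyFiniteMeasure ν]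
    -- `μ` is asymptotically optimally doubling: uniformly on compact subsets of the support,
    -- the ratios `μ(B(τr,Q))/μ(B(r,Q))` tend to `τ^n` as `r → 0`.
    (hAOD : ∀ K : Set (EuclideanSpace ℝ (Fin (n+1))), IsCompact K →
      (K ∩ msupp μ).Nonempty → ∀ τ : ℝ, 0 < τ → τ ≤ 1 → ∀ ε : ℝ, 0 < ε →
        ∃ R : ℝ, 0 < R ∧ ∀ r : ℝ, 0 < r → r ≤ R → ∀ Q' ∈ K ∩ msupp μ,
          |(μ (ball Q' (τ * r))).toReal / (μ (ball Q' r)).toReal - τ ^ n| ≤ ε)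
    (Q : ℕ → EuclideanSpace ℝ (Fin (n+1))) (hQ : ∀ i, Q i ∈ msupp μ)
    (Q₀ : EuclideanSpace ℝ (Fin (n+1)))
    (hQlim : Tendsto Q atTop (𝓝 Q₀))
    (lam : ℕ → ℝ) (hlampos : ∀ i, 0 < lam i) (hlam : Tendsto lam atTop (𝓝 0))
    (hweak : ∀ φ : EuclideanSpace ℝ (Fin (n+1)) → ℝ, Continuous φ → HasCompactSupport φ →
      Tendsto (fun i => ∫ y, φ y ∂(resc μ (lam i) (Q i))) atTop (𝓝 (∫ y, φ y ∂ν))) :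
    ∀ X ∈ msupp ν, ∀ r : ℝ, 0 < r → ν (ball X r) = ENNReal.ofReal (r ^ n) := by
  intro X hX r hr
  have (i : ℕ) : IsFiniteMeasureOnCompacts (resc μ (lam i) (Q i)) :=
    isFiniteMeasureOnCompacts_resc (hlampos i) (hQ i _ (hlampos i)).ne'
  rw [← ENNReal.ofReal_toReal measure_ball_lt_top.ne]
  exact congrArg ENNReal.ofReal <| measureReal_ball_eq_of_tendstoVaguely hweak hr
    (continuous_pow n).continuousAt fun c hc =>
      tendsto_resc_real_ball hAOD hQ hQlim hlampos hlam hweak hX hc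

theorem stmt2 (n : ℕ) (μ ν : Measure (EuclideanSpace ℝ (Fin (n+1))))
    [IsLocallyFiniteMeasure μ] [IsLocallyFiniteMeasure ν]
    (hdoub : ∀ K : Set (EuclideanSpace ℝ (Fin (n+1))), IsCompact K →
      ∃ C : ℝ≥0∞, 1 < C ∧ ∃ R : ℝ, 0 < R ∧ ∀ Q ∈ msupp μ ∩ K, ∀ r : ℝ, 0 < r → r ≤ R →
        μ (ball Q (2 * r)) ≤ C * μ (ball Q r))
    -- `μ` is asymptotically optimally doubling: uniformly on compact subsets of the support,
    -- the ratios `μ(B(τr,Q))/μ(B(r,Q))` tend to `τ^n` as `r → 0`.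
    (hAOD : ∀ K : Set (EuclideanSpace ℝ (Fin (n+1))), IsCompact K →
      (K ∩ msupp μ).Nonempty → ∀ τ : ℝ, 0 < τ → τ ≤ 1 → ∀ ε : ℝ, 0 < ε →
        ∃ R : ℝ, 0 < R ∧ ∀ r : ℝ, 0 < r → r ≤ R → ∀ Q' ∈ K ∩ msupp μ,
          |(μ (ball Q' (τ * r))).toReal / (μ (ball Q' r)).toReal - τ ^ n| ≤ ε)
    (Q : ℕ → EuclideanSpace ℝ (Fin (n+1))) (hQ : ∀ i, Q i ∈ msupp μ)
    (Q₀ : EuclideanSpace ℝ (Fin (n+1))) (hQ₀ : Q₀ ∈ msupp μ)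
    (hQlim : Tendsto Q atTop (𝓝 Q₀))
    (lam : ℕ → ℝ) (hlampos : ∀ i, 0 < lam i) (hlam : Tendsto lam atTop (𝓝 0))
    (hν : ν ≠ 0)
    (hweak : ∀ φ : EuclideanSpace ℝ (Fin (n+1)) → ℝ, Continuous φ → HasCompactSupport φ →
      Tendsto (fun i => ∫ y, φ y ∂(resc μ (lam i) (Q i))) atTop (𝓝 (∫ y, φ y ∂ν))) :
    ∀ X ∈ msupp ν, ∀ r : ℝ, 0 < r → ν (ball X r) = ENNReal.ofReal (r ^ n) :=
  stmt2_general n μ ν hAOD Q hQ Q₀ hQlim lam hlampos hlam hweak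
end
end

section
/- Let n ≥ 3 and let 𝒞 = {(x_1,…,x_{n+1}) ∈ ℝ^{n+1} : x_4^2 = x_1^2 + x_2^2 + x_3^2} be the Kowalski–Preiss cone. Then for every n-dimensional linear subspace L of ℝ^{n+1}, the Hausdorff distance between 𝒞 ∩ B̄(1,0) and L ∩ B̄(1,0) is at least 1/√2. -/
open Metric

noncomputable section

/-! A hyperplane `L` meets the coordinate plane of `e₀, e₁` in a unit vector `y`, by a dimension count.
For `x` on the cone, `x₃² ≥ x₀² + x₁²` and `y₃ = 0`, so
`‖y - x‖² ≥ (y₀ - x₀)² + x₀² + (y₁ - x₁)² + x₁² ≥ (y₀² + y₁²) / 2 = 1 / 2`.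
Hence the point `y` of `L ∩ B̄(1,0)` is at distance at least `1 / √2` from the cone. -/

theorem le_hausdorffDist_of_mem {α : Type*} [PseudoMetricSpace α] {s t : Set α} {y : α} {r : ℝ}
    (hs : Bornology.IsBounded s) (ht : Bornology.IsBounded t) (hs₀ : s.Nonempty) (hy : y ∈ t)
    (h : ∀ x ∈ s, r ≤ dist y x) : r ≤ hausdorffDist s t := by
  rw [hausdorffDist_comm]
  calc r ≤ infDist y s := (le_infDist hs₀).2 h
    _ ≤ hausdorffDist t s := infDist_le_hausdorffDist_of_mem hy
      (hausdorffEDist_ne_top_of_nonempty_of_bounded ⟨y, hy⟩ hs₀ ht hs)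

namespace EuclideanSpace

variable {ι : Type*} [Fintype ι] [DecidableEq ι]

theorem exists_mem_ne_zero_forall_apply_eq_zero (L : Submodule ℝ (EuclideanSpace ℝ ι))
    (s : Finset ι) (h : Fintype.card ι < Module.finrank ℝ L + s.card) :
    ∃ y ∈ L, y ≠ 0 ∧ ∀ k ∉ s, y k = 0 := by
  let f : L →ₗ[ℝ] ({k // k ∉ s} → ℝ) :=
    LinearMap.pi fun k =>
      ((proj k.1 : EuclideanSpace ℝ ι →L[ℝ] ℝ) : EuclideanSpace ℝ ι →ₗ[ℝ] ℝ) ∘ₗ L.subtype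
  have hf : Module.finrank ℝ ({k // k ∉ s} → ℝ) < Module.finrank ℝ L := by
    rw [Module.finrank_fintype_fun_eq_card, Fintype.card_subtype_compl, Fintype.card_coe]
    have := s.card_le_univ
    omega
  obtain ⟨z, hz, hz₀⟩ :=
    Submodule.exists_mem_ne_zero_of_ne_bot (LinearMap.ker_ne_bot_of_finrank_lt hf)
  exact ⟨z, z.2, by simpa using hz₀,
    fun k hk => congrFun ((LinearMap.mem_ker (f := f)).1 hz) ⟨k, hk⟩⟩

theorem exists_norm_eq_one_mem_forall_apply_eq_zero (L : Submodule ℝ (EuclideanSpace ℝ ι))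
    (s : Finset ι) (h : Fintype.card ι < Module.finrank ℝ L + s.card) :
    ∃ y ∈ L, ‖y‖ = 1 ∧ ∀ k ∉ s, y k = 0 := by
  obtain ⟨z, hzL, hz₀, hz⟩ := exists_mem_ne_zero_forall_apply_eq_zero L s h
  refine ⟨‖z‖⁻¹ • z, L.smul_mem _ hzL, norm_smul_inv_norm hz₀, fun k hk => ?_⟩
  simp [hz k hk]

theorem norm_div_sqrt_two_le_dist {i₀ i₁ i₂ : ι} (h₀₁ : i₀ ≠ i₁) (h₀₂ : i₀ ≠ i₂) (h₁₂ : i₁ ≠ i₂)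
    {x y : EuclideanSpace ℝ ι} (hx : x i₀ ^ 2 + x i₁ ^ 2 ≤ x i₂ ^ 2)
    (hy : ∀ k ∉ ({i₀, i₁} : Finset ι), y k = 0) : ‖y‖ / √2 ≤ dist y x := by
  have hy₂ : y i₂ = 0 := hy i₂ (by simp [h₀₂.symm, h₁₂.symm])
  have hnorm : ‖y‖ ^ 2 = y i₀ ^ 2 + y i₁ ^ 2 := by
    rw [real_norm_sq_eq, Fintype.sum_eq_add i₀ i₁ h₀₁]
    rintro k ⟨hk₀, hk₁⟩
    simp [hy k (by simp [hk₀, hk₁])]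
  have hdist : (y i₀ - x i₀) ^ 2 + (y i₁ - x i₁) ^ 2 + x i₂ ^ 2 ≤ dist y x ^ 2 := by
    calc (y i₀ - x i₀) ^ 2 + (y i₁ - x i₁) ^ 2 + x i₂ ^ 2
        = ∑ k ∈ {i₀, i₁, i₂}, dist (y k) (x k) ^ 2 := by
          rw [Finset.sum_insert (by simp [h₀₁, h₀₂]), Finset.sum_pair h₁₂]
          simp [Real.dist_eq, sq_abs, hy₂, add_assoc]
      _ ≤ dist y x ^ 2 := by
          rw [dist_sq_eq]
          exact Finset.sum_le_univ_sum_of_nonneg fun _ => sq_nonneg _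
  rw [← pow_le_pow_iff_left₀ (by positivity) dist_nonneg two_ne_zero, div_pow,
    Real.sq_sqrt zero_le_two]
  nlinarith [sq_nonneg (y i₀ - 2 * x i₀), sq_nonneg (y i₁ - 2 * x i₁)]

end EuclideanSpace

theorem stmt4 (n : ℕ) (hn : 3 ≤ n)
    (L : Submodule ℝ (EuclideanSpace ℝ (Fin (n+1))))
    (hL : Module.finrank ℝ L = n) :
    1 / Real.sqrt 2 ≤
      Metric.hausdorffDist
        ({x : EuclideanSpace ℝ (Fin (n+1)) |
            (x 3) ^ 2 = (x 0) ^ 2 + (x 1) ^ 2 + (x 2) ^ 2} ∩ closedBall 0 1)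
        ((L : Set (EuclideanSpace ℝ (Fin (n+1)))) ∩ closedBall 0 1) := by
  have h₃ : 3 % (n + 1) = 3 := Nat.mod_eq_of_lt (by omega)
  have h₀₁ : (0 : Fin (n+1)) ≠ 1 := by simp [Fin.ext_iff]; omega
  have h₀₃ : (0 : Fin (n+1)) ≠ 3 := by simp [Fin.ext_iff, h₃]
  have h₁₃ : (1 : Fin (n+1)) ≠ 3 := by
    simp [Fin.ext_iff, h₃, Nat.mod_eq_of_lt (show 1 < n + 1 by omega)]
  obtain ⟨y, hyL, hy₁, hy⟩ := EuclideanSpace.exists_norm_eq_one_mem_forall_apply_eq_zero L {0, 1}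
    (by rw [Fintype.card_fin, hL, Finset.card_pair h₀₁]; omega)
  refine le_hausdorffDist_of_mem (isBounded_closedBall.subset Set.inter_subset_right)
    (isBounded_closedBall.subset Set.inter_subset_right) ⟨0, by simp⟩
    ⟨hyL, by simp [hy₁]⟩ fun x hx => ?_
  rw [← hy₁]
  exact EuclideanSpace.norm_div_sqrt_two_le_dist h₀₁ h₀₃ h₁₃
    (hx.1 ▸ le_add_of_nonneg_right (sq_nonneg _)) hy
end
end

section
/- Let n ≥ 3. Define u: ℝ^{n+1} → ℝ by u(x) = (x_1^2 + x_2^2 + x_3^2 − x_4^2)/(2√2 · ω_n · √(x_1^2 + x_2^2 + x_3^2)) on the set where (x_1,x_2,x_3) ≠ 0. Then u is harmonic on {x ∈ ℝ^{n+1} : (x_1,x_2,x_3) ≠ 0}, u > 0 on Ω = {x : x_4^2 < x_1^2+x_2^2+x_3^2}, and u = 0 on {x : x_4^2 = x_1^2+x_2^2+x_3^2, (x_1,x_2,x_3) ≠ 0}. -/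
open MeasureTheory Metric
open scoped ENNReal

noncomputable section

/-- `ω_n`: the Lebesgue volume of the unit ball in `ℝ^n`. -/
def omegaBall (n : ℕ) : ℝ := (volume (ball (0 : EuclideanSpace ℝ (Fin n)) 1)).toReal

/-- `u(x) = (x₁² + x₂² + x₃² − x₄²) / (2√2 ωₙ √(x₁² + x₂² + x₃²))`. -/
def uCone (n : ℕ) (x : EuclideanSpace ℝ (Fin (n+1))) : ℝ :=
  ((x 0) ^ 2 + (x 1) ^ 2 + (x 2) ^ 2 - (x 3) ^ 2) /
    (2 * Real.sqrt 2 * omegaBall n * Real.sqrt ((x 0) ^ 2 + (x 1) ^ 2 + (x 2) ^ 2))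

/-! Off the axis `ρ = 0`, where `ρ = |(x₁, x₂, x₃)|` and `t = x₄`, we have `u = c (ρ - t²/ρ)`.
One computation gives the second derivative of `u` in an arbitrary direction `v`; tracing it over
the standard basis uses `∑ |eᵢ'|² = 3`, `∑ ⟪x', eᵢ⟫² = ρ²`, `∑ (eᵢ)₄ ⟪x', eᵢ⟫ = 0` and
`∑ (eᵢ)₄² = 1`, where `'` is the projection to the first three coordinates, and the terms cancel:
`Δρ = 2/ρ` and `Δ(t²/ρ) = 2/ρ`. Sign and vanishing of `u` are read off the numerator `ρ² - t²`. -/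

open Filter Topology
open scoped RealInnerProductSpace

theorem fderiv_fderiv_apply_of_eventually_hasFDerivAt {𝕜 E F : Type*} [NontriviallyNormedField 𝕜]
    [NormedAddCommGroup E] [NormedSpace 𝕜 E] [NormedAddCommGroup F] [NormedSpace 𝕜 F]
    {f : E → F} {f' : E → E →L[𝕜] F} {g' : E →L[𝕜] F} {x v : E}
    (hf : ∀ᶠ y in 𝓝 x, HasFDerivAt f (f' y) y) (hg : HasFDerivAt (fun y => f' y v) g' x)
    (w : E) : fderiv 𝕜 (fun y => fderiv 𝕜 f y v) x w = g' w := by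
  have hfg : (fun y => fderiv 𝕜 f y v) =ᶠ[𝓝 x] fun y => f' y v :=
    hf.mono fun y hy => congrArg (· v) hy.fderiv
  rw [hfg.fderiv_eq, hg.fderiv]

theorem omegaBall_pos (n : ℕ) : 0 < omegaBall n :=
  ENNReal.toReal_pos (measure_ball_pos volume 0 one_pos).ne' measure_ball_lt_top.ne

namespace ConeHarmonic

variable {n : ℕ}

theorem coords_ne (hn : 3 ≤ n) :
    (1 : Fin (n + 1)) ≠ 0 ∧ (2 : Fin (n + 1)) ≠ 0 ∧ (2 : Fin (n + 1)) ≠ 1 ∧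
      (3 : Fin (n + 1)) ≠ 0 ∧ (3 : Fin (n + 1)) ≠ 1 ∧ (3 : Fin (n + 1)) ≠ 2 := by
  simp [Fin.ext_iff, Nat.mod_eq_of_lt (show 1 < n + 1 by omega),
    Nat.mod_eq_of_lt (show 2 < n + 1 by omega), Nat.mod_eq_of_lt (show 3 < n + 1 by omega)]

/-- The orthogonal projection `x ↦ (x₁, x₂, x₃, 0, …, 0)` (coordinates are indexed from `0`). -/
def spatial : EuclideanSpace ℝ (Fin (n + 1)) →L[ℝ] EuclideanSpace ℝ (Fin (n + 1)) :=
  (EuclideanSpace.proj 0).smulRight (EuclideanSpace.single 0 1) +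
    (EuclideanSpace.proj 1).smulRight (EuclideanSpace.single 1 1) +
    (EuclideanSpace.proj 2).smulRight (EuclideanSpace.single 2 1)

def rho (x : EuclideanSpace ℝ (Fin (n + 1))) : ℝ := √(x 0 ^ 2 + x 1 ^ 2 + x 2 ^ 2)

def coneFun (c : ℝ) (x : EuclideanSpace ℝ (Fin (n + 1))) : ℝ :=
  c * (rho x - x 3 ^ 2 * (rho x)⁻¹)

theorem inner_spatial_left (x v : EuclideanSpace ℝ (Fin (n + 1))) :
    ⟪spatial x, v⟫ = x 0 * v 0 + x 1 * v 1 + x 2 * v 2 := by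
  simp [spatial, inner_add_left, real_inner_smul_left, EuclideanSpace.inner_single_left]

theorem inner_spatial_comm (x v : EuclideanSpace ℝ (Fin (n + 1))) :
    ⟪spatial x, v⟫ = ⟪spatial v, x⟫ := by
  simp only [inner_spatial_left]; ring

theorem inner_spatial_self (hn : 3 ≤ n) (x : EuclideanSpace ℝ (Fin (n + 1))) :
    ⟪spatial x, spatial x⟫ = x 0 ^ 2 + x 1 ^ 2 + x 2 ^ 2 := by
  obtain ⟨h10, h20, h21, -, -, -⟩ := coords_ne hn
  rw [inner_spatial_left]
  simp [spatial, h10, h20, h21, h10.symm, h20.symm, h21.symm, sq]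

theorem sum_inner_spatial_single_sq (hn : 3 ≤ n) (x : EuclideanSpace ℝ (Fin (n + 1))) :
    ∑ i, ⟪spatial x, EuclideanSpace.single i (1 : ℝ)⟫ ^ 2 = x 0 ^ 2 + x 1 ^ 2 + x 2 ^ 2 := by
  rw [← inner_spatial_self hn, ← (EuclideanSpace.basisFun _ ℝ).sum_inner_mul_inner]
  simp [sq, real_inner_comm]

theorem sum_single_three_mul_inner_spatial (hn : 3 ≤ n) (x : EuclideanSpace ℝ (Fin (n + 1))) :
    ∑ i, EuclideanSpace.single i (1 : ℝ) 3 * ⟪spatial x, EuclideanSpace.single i (1 : ℝ)⟫ = 0 := by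
  obtain ⟨-, -, -, h30, h31, h32⟩ := coords_ne hn
  simp [inner_spatial_left, h30.symm, h31.symm, h32.symm]

theorem sum_inner_spatial_single_single :
    ∑ i : Fin (n + 1), ⟪spatial (EuclideanSpace.single i (1 : ℝ)), EuclideanSpace.single i 1⟫ =
      (3 : ℝ) := by
  simp only [inner_spatial_left, ← sq, Finset.sum_add_distrib]
  norm_num

theorem sum_single_three_sq :
    ∑ i : Fin (n + 1), EuclideanSpace.single i (1 : ℝ) 3 ^ 2 = (1 : ℝ) := by
  simp

variable {x : EuclideanSpace ℝ (Fin (n + 1))}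

theorem isOpen_rho_ne_zero :
    IsOpen {x : EuclideanSpace ℝ (Fin (n + 1)) | x 0 ^ 2 + x 1 ^ 2 + x 2 ^ 2 ≠ 0} :=
  isOpen_ne_fun (by fun_prop) continuous_const

theorem rho_pos (hx : x 0 ^ 2 + x 1 ^ 2 + x 2 ^ 2 ≠ 0) : 0 < rho x :=
  Real.sqrt_pos.2 (lt_of_le_of_ne (by positivity) hx.symm)

theorem rho_sq : rho x ^ 2 = x 0 ^ 2 + x 1 ^ 2 + x 2 ^ 2 :=
  Real.sq_sqrt (by positivity)

theorem hasFDerivAt_rho (hx : x 0 ^ 2 + x 1 ^ 2 + x 2 ^ 2 ≠ 0) :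
    HasFDerivAt rho ((rho x)⁻¹ • innerSL ℝ (spatial x)) x := by
  have hsq : HasFDerivAt (fun y : EuclideanSpace ℝ (Fin (n + 1)) => y 0 ^ 2 + y 1 ^ 2 + y 2 ^ 2)
      ((2 : ℝ) • innerSL ℝ (spatial x)) x := by
    have hc (i : Fin (n + 1)) := PiLp.hasFDerivAt_apply (𝕜 := ℝ) 2 x i
    refine ((((hc 0).pow 2).add ((hc 1).pow 2)).add ((hc 2).pow 2)).congr_fderiv ?_
    ext v
    simp only [add_apply, smul_apply, PiLp.proj_apply, smul_eq_mul, nsmul_eq_mul,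
      coe_innerSL_apply, inner_spatial_left]
    ring
  refine (hsq.sqrt hx).congr_fderiv ?_
  rw [smul_smul]
  congr 1
  simp only [rho]
  field_simp

theorem hasFDerivAt_inv_rho_pow (hx : x 0 ^ 2 + x 1 ^ 2 + x 2 ^ 2 ≠ 0) (k : ℕ) :
    HasFDerivAt (fun y => (rho y)⁻¹ ^ k)
      ((-(k : ℝ) * (rho x)⁻¹ ^ (k + 2)) • innerSL ℝ (spatial x)) x := by
  have hρ := (rho_pos hx).ne'
  refine (((hasDerivAt_inv hρ).comp_hasFDerivAt x (hasFDerivAt_rho hx)).pow k).congr_fderiv ?_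
  rw [smul_smul, smul_smul]
  congr 1
  rcases k with _ | k
  · simp
  · simp only [Function.comp_apply, add_tsub_cancel_right, inv_pow, nsmul_eq_mul, Nat.cast_add]
    field_simp
    ring

theorem hasFDerivAt_coneFun (hx : x 0 ^ 2 + x 1 ^ 2 + x 2 ^ 2 ≠ 0) (c : ℝ) :
    HasFDerivAt (coneFun c) (c • (((rho x)⁻¹ + x 3 ^ 2 * (rho x)⁻¹ ^ 3) • innerSL ℝ (spatial x) -
      (2 * x 3 * (rho x)⁻¹) • EuclideanSpace.proj 3)) x := by
  have h := (hasFDerivAt_rho hx).sub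
    (((PiLp.hasFDerivAt_apply (𝕜 := ℝ) 2 x 3).pow 2).mul (hasFDerivAt_inv_rho_pow hx 1))
  simp only [pow_one] at h
  refine (h.const_mul c).congr_fderiv ?_
  ext v
  simp only [smul_apply, sub_apply, add_apply, coe_innerSL_apply,
    PiLp.proj_apply, smul_eq_mul, nsmul_eq_mul]
  push_cast
  ring

theorem fderiv_fderiv_coneFun_apply (hx : x 0 ^ 2 + x 1 ^ 2 + x 2 ^ 2 ≠ 0) (c : ℝ)
    (v : EuclideanSpace ℝ (Fin (n + 1))) :
    fderiv ℝ (fun y => fderiv ℝ (coneFun c) y v) x v =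
      c * (((rho x)⁻¹ + x 3 ^ 2 * (rho x)⁻¹ ^ 3) * ⟪spatial v, v⟫ -
        ((rho x)⁻¹ ^ 3 + 3 * x 3 ^ 2 * (rho x)⁻¹ ^ 5) * ⟪spatial x, v⟫ ^ 2 +
        4 * x 3 * (rho x)⁻¹ ^ 3 * (v 3 * ⟪spatial x, v⟫) - 2 * (rho x)⁻¹ * v 3 ^ 2) := by
  have hD : ∀ᶠ y in 𝓝 x, HasFDerivAt (coneFun c) _ y :=
    eventually_of_mem (isOpen_rho_ne_zero.mem_nhds hx) fun y hy => hasFDerivAt_coneFun hy c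
  have h3 := PiLp.hasFDerivAt_apply (𝕜 := ℝ) 2 x 3
  have hρ := hasFDerivAt_inv_rho_pow hx 1
  simp only [pow_one] at hρ
  have hL : HasFDerivAt (fun y => ⟪spatial y, v⟫) (innerSL ℝ (spatial v)) x := by
    simp only [inner_spatial_comm _ v]
    exact (innerSL ℝ (spatial v)).hasFDerivAt
  have hH := ((((hρ.add ((h3.pow 2).mul (hasFDerivAt_inv_rho_pow hx 3))).mul hL).sub
    ((h3.const_mul 2).mul hρ |>.mul_const (v 3))).const_mul c)
  rw [fderiv_fderiv_apply_of_eventually_hasFDerivAt hD (by simpa using hH)]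
  simp only [smul_apply, sub_apply, add_apply, neg_apply, coe_innerSL_apply,
    PiLp.proj_apply, smul_eq_mul]
  ring

theorem sum_fderiv_fderiv_coneFun_single (hn : 3 ≤ n) (hx : x 0 ^ 2 + x 1 ^ 2 + x 2 ^ 2 ≠ 0)
    (c : ℝ) :
    ∑ i : Fin (n + 1), fderiv ℝ (fun y => fderiv ℝ (coneFun c) y (EuclideanSpace.single i 1)) x
      (EuclideanSpace.single i 1) = 0 := by
  simp only [fderiv_fderiv_coneFun_apply hx, ← Finset.mul_sum, Finset.sum_add_distrib,
    Finset.sum_sub_distrib, sum_inner_spatial_single_sq hn, sum_single_three_mul_inner_spatial hn,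
    sum_inner_spatial_single_single, sum_single_three_sq]
  rw [← rho_sq]
  have hρ := (rho_pos hx).ne'
  field_simp
  ring

theorem contDiffAt_coneFun (hx : x 0 ^ 2 + x 1 ^ 2 + x 2 ^ 2 ≠ 0) (c : ℝ) :
    ContDiffAt ℝ 2 (coneFun c) x := by
  have hρ : ContDiffAt ℝ 2 rho x := ContDiffAt.sqrt (by fun_prop) hx
  have ht : ContDiffAt ℝ 2 (fun y : EuclideanSpace ℝ (Fin (n + 1)) => y 3 ^ 2) x := by fun_prop
  exact contDiffAt_const.mul (hρ.sub (ht.mul (hρ.inv (rho_pos hx).ne')))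

-- On the axis `ρ = 0` both sides are `0`, through division by zero.
theorem uCone_eq_coneFun : uCone n = coneFun (2 * √2 * omegaBall n)⁻¹ := by
  ext x
  change (_ - x 3 ^ 2) / (2 * √2 * omegaBall n * rho x) = _
  rw [← rho_sq, coneFun]
  rcases eq_or_ne (rho x) 0 with h | h
  · simp [h]
  · field_simp

theorem uCone_pos (h : x 3 ^ 2 < x 0 ^ 2 + x 1 ^ 2 + x 2 ^ 2) : 0 < uCone n x := by
  have hρ : 0 < x 0 ^ 2 + x 1 ^ 2 + x 2 ^ 2 := (sq_nonneg _).trans_lt h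
  have hω := omegaBall_pos n
  exact div_pos (by linarith) (mul_pos (by positivity) (Real.sqrt_pos.2 hρ))

theorem uCone_eq_zero (h : x 3 ^ 2 = x 0 ^ 2 + x 1 ^ 2 + x 2 ^ 2) : uCone n x = 0 := by
  simp [uCone, h]

end ConeHarmonic

theorem stmt6 (n : ℕ) (hn : 3 ≤ n) :
    -- u is C² on the set where (x₁, x₂, x₃) ≠ 0 …
    ContDiffOn ℝ 2 (uCone n)
      {x : EuclideanSpace ℝ (Fin (n+1)) | (x 0) ^ 2 + (x 1) ^ 2 + (x 2) ^ 2 ≠ 0} ∧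
    -- … and harmonic there: the Laplacian (sum of pure second derivatives) vanishes,
    (∀ x ∈ {x : EuclideanSpace ℝ (Fin (n+1)) | (x 0) ^ 2 + (x 1) ^ 2 + (x 2) ^ 2 ≠ 0},
      ∑ i : Fin (n+1),
        fderiv ℝ (fun y => fderiv ℝ (uCone n) y (EuclideanSpace.single i 1)) x
          (EuclideanSpace.single i 1) = 0) ∧
    -- u > 0 on Ω = {x₄² < x₁² + x₂² + x₃²},
    (∀ x : EuclideanSpace ℝ (Fin (n+1)),
      (x 3) ^ 2 < (x 0) ^ 2 + (x 1) ^ 2 + (x 2) ^ 2 → 0 < uCone n x) ∧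
    -- and u = 0 on the cone minus the axis.
    (∀ x : EuclideanSpace ℝ (Fin (n+1)),
      (x 3) ^ 2 = (x 0) ^ 2 + (x 1) ^ 2 + (x 2) ^ 2 →
      (x 0) ^ 2 + (x 1) ^ 2 + (x 2) ^ 2 ≠ 0 → uCone n x = 0) := by
  refine ⟨fun x hx => ?_, fun x hx => ?_, fun x h => ConeHarmonic.uCone_pos h,
    fun x h _ => ConeHarmonic.uCone_eq_zero h⟩
  · rw [ConeHarmonic.uCone_eq_coneFun]
    exact (ConeHarmonic.contDiffAt_coneFun hx _).contDiffWithinAt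
  · rw [ConeHarmonic.uCone_eq_coneFun]
    exact ConeHarmonic.sum_fderiv_fderiv_coneFun_single hn hx _
end
end

section
/- Let ν and m be unit vectors in ℝ^{n+1} with ⟨ν, m⟩ ≥ 1/2, let Λ = ν^⊥ and L = m^⊥, and let h: Λ → ℝ be Lipschitz with Lipschitz constant at most 1/8. Then the orthogonal projection Π of ℝ^{n+1} onto L is injective on the graph 𝒢 = {p + h(p)ν : p ∈ Λ}. Moreover, for P = p + h(p)ν and Q = q + h(q)ν in 𝒢 with Π(P) = Π(Q), one has |p − q| ≤ 3|h(p) − h(q)|, which forces p = q. -/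
/-!
If `Π(P) = Π(Q)` for the projection `Π x = x - ⟪x, m⟫ m` onto `m^⊥`, then `P - Q = ⟪P - Q, m⟫ m`.
Pairing with `ν` kills the components `p, q ∈ ν^⊥` and gives `⟪P - Q, m⟫ ⟪m, ν⟫ = h p - h q`,
so `|⟪P - Q, m⟫| ≤ 2 |h p - h q|` and `‖p - q‖ ≤ |⟪P - Q, m⟫| + |h p - h q| ≤ 3 |h p - h q|`.
Since `h` is `1/8`-Lipschitz, `3 |h p - h q| ≤ (3/8) ‖p - q‖`, forcing `p = q`.
-/

open scoped RealInnerProductSpace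

noncomputable section

theorem eq_of_dist_le_mul_dist_of_lipschitzWith {α : Type*} [MetricSpace α] {f : α → ℝ}
    {K : NNReal} {C : ℝ} (hf : LipschitzWith K f) (hCK : C * K < 1) {x y : α}
    (hxy : dist x y ≤ C * dist (f x) (f y)) : x = y := by
  rcases lt_or_ge C 0 with hC | hC
  · exact dist_le_zero.1 (hxy.trans (mul_nonpos_of_nonpos_of_nonneg hC.le dist_nonneg))
  have : dist x y ≤ C * K * dist x y := by
    rw [mul_assoc]
    exact hxy.trans (mul_le_mul_of_nonneg_left (hf.dist_le_mul x y) hC)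
  exact dist_le_zero.1 (by nlinarith [dist_nonneg (x := x) (y := y)])

section GraphProjection

variable {E : Type*} [NormedAddCommGroup E] [InnerProductSpace ℝ E]

theorem sub_eq_inner_sub_smul_of_sub_inner_smul_eq {x y m : E}
    (h : x - ⟪x, m⟫ • m = y - ⟪y, m⟫ • m) : x - y = ⟪x - y, m⟫ • m := by
  rw [inner_sub_left, sub_smul]
  linear_combination (norm := module) h

variable {ν m p q : E} {a b : ℝ}

theorem inner_sub_mul_inner_eq_sub_of_proj_eq (hν : ‖ν‖ = 1) (hp : p ∈ (ℝ ∙ ν)ᗮ)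
    (hq : q ∈ (ℝ ∙ ν)ᗮ)
    (h : p + a • ν - ⟪p + a • ν, m⟫ • m = q + b • ν - ⟪q + b • ν, m⟫ • m) :
    ⟪p + a • ν - (q + b • ν), m⟫ * ⟪m, ν⟫ = a - b := by
  have hνp : ⟪ν, p⟫ = 0 := Submodule.mem_orthogonal_singleton_iff_inner_right.1 hp
  have hνq : ⟪ν, q⟫ = 0 := Submodule.mem_orthogonal_singleton_iff_inner_right.1 hq
  have hνν : ⟪ν, ν⟫ = 1 := by rw [real_inner_self_eq_norm_sq, hν, one_pow]
  have := congrArg (⟪ν, ·⟫) (sub_eq_inner_sub_smul_of_sub_inner_smul_eq h)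
  simp only [inner_sub_right, inner_add_right, inner_smul_right, hνp, hνq, hνν] at this
  rw [real_inner_comm ν m]
  linarith

theorem norm_sub_le_of_proj_eq (hν : ‖ν‖ = 1) (hm : ‖m‖ = 1) {δ : ℝ} (hδ : 0 < δ)
    (hνm : δ ≤ ⟪ν, m⟫) (hp : p ∈ (ℝ ∙ ν)ᗮ) (hq : q ∈ (ℝ ∙ ν)ᗮ)
    (h : p + a • ν - ⟪p + a • ν, m⟫ • m = q + b • ν - ⟪q + b • ν, m⟫ • m) :
    ‖p - q‖ ≤ (1 + δ⁻¹) * |a - b| := by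
  set c := ⟪p + a • ν - (q + b • ν), m⟫
  have hc : |c| * ⟪m, ν⟫ = |a - b| := by
    rw [← inner_sub_mul_inner_eq_sub_of_proj_eq hν hp hq h, abs_mul,
      abs_of_pos (a := ⟪m, ν⟫) (by rw [real_inner_comm]; linarith)]
  have hcδ : |c| ≤ δ⁻¹ * |a - b| := by
    rw [le_inv_mul_iff₀ hδ, ← hc, mul_comm, real_inner_comm]
    exact mul_le_mul_of_nonneg_left hνm (abs_nonneg c)
  have hpq : p - q = c • m - (a - b) • ν := by
    linear_combination (norm := module) sub_eq_inner_sub_smul_of_sub_inner_smul_eq h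
  calc ‖p - q‖ ≤ ‖c • m‖ + ‖(a - b) • ν‖ := hpq ▸ norm_sub_le _ _
    _ = |c| + |a - b| := by rw [norm_smul, norm_smul, hm, hν, Real.norm_eq_abs, Real.norm_eq_abs,
        mul_one, mul_one]
    _ ≤ (1 + δ⁻¹) * |a - b| := by linarith

theorem norm_sub_le_and_eq_of_proj_graph_eq (hν : ‖ν‖ = 1) (hm : ‖m‖ = 1)
    (hνm : 1 / 2 ≤ ⟪ν, m⟫) {h : (ℝ ∙ ν)ᗮ → ℝ} (hlip : LipschitzWith (1 / 8) h)
    {p q : (ℝ ∙ ν)ᗮ}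
    (hpq : p + h p • ν - ⟪p + h p • ν, m⟫ • m = q + h q • ν - ⟪q + h q • ν, m⟫ • m) :
    ‖(p : E) - q‖ ≤ 3 * |h p - h q| ∧ p = q := by
  have hbound : ‖(p : E) - q‖ ≤ 3 * |h p - h q| := by
    convert norm_sub_le_of_proj_eq hν hm (by norm_num) hνm p.2 q.2 hpq using 2
    norm_num
  refine ⟨hbound, eq_of_dist_le_mul_dist_of_lipschitzWith hlip (C := 3) (by norm_num) ?_⟩
  rwa [dist_eq_norm, Real.dist_eq, Submodule.coe_norm, Submodule.coe_sub]

end GraphProjection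

theorem stmt14 (n : ℕ) (ν m : EuclideanSpace ℝ (Fin (n+1)))
    (hν : ‖ν‖ = 1) (hm : ‖m‖ = 1) (hinner : (1 : ℝ) / 2 ≤ ⟪ν, m⟫)
    (h : (Submodule.span ℝ {ν})ᗮ → ℝ) (hlip : LipschitzWith (1/8) h) :
    -- the orthogonal projection Π onto L = m^⊥, x ↦ x − ⟨x,m⟩m, is injective on the graph 𝒢
    Set.InjOn (fun x : EuclideanSpace ℝ (Fin (n+1)) => x - ⟪x, m⟫ • m)
      {y : EuclideanSpace ℝ (Fin (n+1)) |
        ∃ p : (Submodule.span ℝ {ν})ᗮ, y = (p : EuclideanSpace ℝ (Fin (n+1))) + h p • ν} ∧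
    -- moreover, if Π(P) = Π(Q) with P, Q on the graph, then |p − q| ≤ 3|h(p) − h(q)| and p = q
    ∀ p q : (Submodule.span ℝ {ν})ᗮ,
      (((p : EuclideanSpace ℝ (Fin (n+1))) + h p • ν) -
          ⟪(p : EuclideanSpace ℝ (Fin (n+1))) + h p • ν, m⟫ • m) =
        (((q : EuclideanSpace ℝ (Fin (n+1))) + h q • ν) -
          ⟪(q : EuclideanSpace ℝ (Fin (n+1))) + h q • ν, m⟫ • m) →
      ‖(p : EuclideanSpace ℝ (Fin (n+1))) - (q : EuclideanSpace ℝ (Fin (n+1)))‖ ≤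
          3 * |h p - h q| ∧ p = q := by
  have core := fun (p q : (ℝ ∙ ν)ᗮ) hpq ↦
    norm_sub_le_and_eq_of_proj_graph_eq hν hm hinner hlip (p := p) (q := q) hpq
  refine ⟨?_, core⟩
  rintro _ ⟨p, rfl⟩ _ ⟨q, rfl⟩ hpq
  rw [(core p q hpq).2]
end
end

section
/- Let Ω ⊆ ℝ^{n+1} be open, Q₀ ∈ ∂Ω, r > 0, δ ∈ (0, 1/8). Let L be an n-dimensional affine plane through Q₀ with unit normal ν, and suppose that {x + tν ∈ B(r,Q₀) : x ∈ L, t > 2δr} ⊆ Ω and {x + tν ∈ B(r,Q₀) : x ∈ L, t < −2δr} ⊆ ℝ^{n+1} ∖ Ω. Then: (i) for every x ∈ L with |x − Q₀| < r√(1 − 16δ²) there exists t with |t| ≤ 2δr and x + tν ∈ ∂Ω; consequently (ii) the orthogonal projection of ∂Ω ∩ B(r,Q₀) onto L contains the n-dimensional disk {x ∈ L : |x − Q₀| < r√(1−16δ²)}, and (iii) ℋ^n(∂Ω ∩ B(r,Q₀)) ≥ (1 − 16δ²)^{n/2} ω_n r^n. -/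
/-!
The open half-caps of `B(r, Q₀)` above height `2δr` and below `-2δr` lie in `Ω` and in its
complement, hence in `interior Ω` and `interior Ωᶜ`, so `∂Ω ∩ B(r, Q₀)` lies in the slab of height
`2δr` around `L`. For `x` in the disk of radius `r √(1 - 16δ²)` the normal segment
`x + [-3δr, 3δr] ν` stays in the ball and joins `Ω` to its complement, so it meets `∂Ω`, necessarily
inside the slab. The projection onto `L` is 1-Lipschitz, so `ℋⁿ(∂Ω ∩ B)` is at least `ℋⁿ` of the
disk, an isometric copy of a Euclidean `n`-ball, on which `ℋⁿ` dominates Lebesgue measure.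
-/

open MeasureTheory Metric
open scoped ENNReal RealInnerProductSpace

noncomputable section

theorem IsPreconnected.inter_frontier_nonempty {X : Type*} [TopologicalSpace X] {s t : Set X}
    (hs : IsPreconnected s) (hst : (s ∩ t).Nonempty) (hst' : (s \ t).Nonempty) :
    (s ∩ frontier t).Nonempty := by
  by_contra! h
  have hcover : s ⊆ interior t ∪ (closure t)ᶜ := fun y hy => by
    by_cases hyt : y ∈ interior t
    · exact Or.inl hyt
    · exact Or.inr fun hyc => (Set.eq_empty_iff_forall_notMem.1 h) y ⟨hy, hyc, hyt⟩
  obtain ⟨p, hps, hpt⟩ := hst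
  obtain ⟨q, hqs, hqt⟩ := hst'
  obtain ⟨y, -, hyi, hyc⟩ := hs _ _ isOpen_interior isClosed_closure.isOpen_compl hcover
    ⟨p, hps, (hcover hps).resolve_right fun hp => hp (subset_closure hpt)⟩
    ⟨q, hqs, (hcover hqs).resolve_left fun hq => hqt (interior_subset hq)⟩
  exact hyc (interior_subset.trans subset_closure hyi)

theorem notMem_frontier_of_isOpen_subset {X : Type*} [TopologicalSpace X] {U s : Set X}
    (hU : IsOpen U) (hUs : U ⊆ s) {y : X} (hy : y ∈ U) : y ∉ frontier s :=
  fun h => h.2 (interior_maximal hUs hU hy)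

-- `hausdorffMeasure_pi_real` is about the sup norm; the Euclidean norm dominates it.
theorem EuclideanSpace.volume_le_hausdorffMeasure {ι : Type*} [Fintype ι]
    (s : Set (EuclideanSpace ℝ ι)) : volume s ≤ μH[Fintype.card ι] s := by
  have himage : WithLp.ofLp '' s = WithLp.toLp 2 ⁻¹' s :=
    (WithLp.linearEquiv 2 ℝ (ι → ℝ)).toEquiv.image_eq_preimage_symm s
  calc volume s = volume (WithLp.ofLp '' s) := by
        rw [himage]
        exact ((EuclideanSpace.volume_preserving_symm_measurableEquiv_toLp ι).symm
          |>.measure_preimage_equiv s).symm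
    _ = μH[Fintype.card ι] (WithLp.ofLp '' s) := by rw [hausdorffMeasure_pi_real]
    _ ≤ μH[Fintype.card ι] s := by
        simpa only [ENNReal.coe_one, ENNReal.one_rpow, one_mul] using
          (PiLp.lipschitzWith_ofLp 2 fun _ : ι => ℝ).hausdorffMeasure_image_le
            (Nat.cast_nonneg (Fintype.card ι)) s

theorem volume_ball_eq_ofReal_pow_mul_omegaBall (n : ℕ) (x : EuclideanSpace ℝ (Fin n)) {ρ : ℝ}
    (hρ : 0 < ρ) : volume (ball x ρ) = ENNReal.ofReal (ρ ^ n * omegaBall n) := by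
  rw [Measure.addHaar_ball_of_pos _ _ hρ, finrank_euclideanSpace_fin,
    ENNReal.ofReal_mul (by positivity), omegaBall, ENNReal.ofReal_toReal measure_ball_lt_top.ne]

section Plane

variable {E : Type*} [NormedAddCommGroup E] [InnerProductSpace ℝ E] {Q₀ ν : E}

theorem inner_add_smul_sub (hν : ‖ν‖ = 1) {x : E} (hx : ⟪x - Q₀, ν⟫ = 0) (t : ℝ) :
    ⟪x + t • ν - Q₀, ν⟫ = t := by
  rw [add_sub_right_comm, inner_add_left, hx, real_inner_smul_left, real_inner_self_eq_norm_sq,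
    hν]
  ring

theorem norm_add_smul_sub_sq (hν : ‖ν‖ = 1) {x : E} (hx : ⟪x - Q₀, ν⟫ = 0) (t : ℝ) :
    ‖x + t • ν - Q₀‖ ^ 2 = ‖x - Q₀‖ ^ 2 + t ^ 2 := by
  rw [add_sub_right_comm, norm_add_sq_real, real_inner_smul_right, hx, norm_smul, hν,
    Real.norm_eq_abs, mul_one, sq_abs]
  ring

theorem of_forall_add_smul_of_inner_eq_zero (hν : ‖ν‖ = 1) {p : ℝ → Prop} {q : E → Prop}
    (h : ∀ x, ⟪x - Q₀, ν⟫ = 0 → ∀ t, p t → q (x + t • ν)) {y : E} (hy : p ⟪y - Q₀, ν⟫) :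
    q y := by
  have hx : ⟪y - ⟪y - Q₀, ν⟫ • ν - Q₀, ν⟫ = 0 := by
    rw [sub_right_comm, inner_sub_left, real_inner_smul_left, real_inner_self_eq_norm_sq, hν]
    ring
  simpa using h _ hx _ hy

theorem lipschitzWith_sub_inner_smul (hν : ‖ν‖ = 1) (Q₀ : E) :
    LipschitzWith 1 fun y => y - ⟪y - Q₀, ν⟫ • ν := by
  have hP : (fun y => y - ⟪y - Q₀, ν⟫ • ν) = fun y => (ℝ ∙ ν)ᗮ.starProjection (y - Q₀) + Q₀ := by
    ext y
    simp only [Submodule.starProjection_orthogonal_val,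
      Submodule.starProjection_unit_singleton ℝ hν, real_inner_comm ν]
    abel
  refine hP ▸ LipschitzWith.of_dist_le_mul fun a b => ?_
  rw [dist_eq_norm, dist_eq_norm, add_sub_add_right_eq_sub, ← map_sub, sub_sub_sub_cancel_right]
  exact (ℝ ∙ ν)ᗮ.starProjection.le_of_opNorm_le (Submodule.starProjection_norm_le _) _

theorem abs_inner_le_of_mem_frontier (hν : ‖ν‖ = 1) {Ω : Set E} {r c : ℝ}
    (hplus : ∀ x, ⟪x - Q₀, ν⟫ = 0 → ∀ t, c < t → x + t • ν ∈ ball Q₀ r → x + t • ν ∈ Ω)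
    (hminus : ∀ x, ⟪x - Q₀, ν⟫ = 0 → ∀ t, t < -c → x + t • ν ∈ ball Q₀ r → x + t • ν ∉ Ω)
    {y : E} (hyΩ : y ∈ frontier Ω) (hyr : y ∈ ball Q₀ r) : |⟪y - Q₀, ν⟫| ≤ c := by
  have hcont : Continuous fun z : E => ⟪z - Q₀, ν⟫ := by fun_prop
  rw [abs_le]
  constructor
  · by_contra! hy
    refine notMem_frontier_of_isOpen_subset (s := Ωᶜ)
      (isOpen_ball.inter (isOpen_lt hcont continuous_const)) (fun z hz => ?_) ⟨hyr, hy⟩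
      (frontier_compl Ω ▸ hyΩ)
    exact of_forall_add_smul_of_inner_eq_zero hν (q := fun z => z ∈ ball Q₀ r → z ∉ Ω) hminus
      hz.2 hz.1
  · by_contra! hy
    refine notMem_frontier_of_isOpen_subset
      (isOpen_ball.inter (isOpen_lt continuous_const hcont)) (fun z hz => ?_) ⟨hyr, hy⟩ hyΩ
    exact of_forall_add_smul_of_inner_eq_zero hν (q := fun z => z ∈ ball Q₀ r → z ∈ Ω) hplus
      hz.2 hz.1

theorem exists_add_smul_mem_frontier (hν : ‖ν‖ = 1) {Ω : Set E} {r c s : ℝ} (hr : 0 ≤ r)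
    (hc : 0 ≤ c) (hcs : c < s)
    (hplus : ∀ x, ⟪x - Q₀, ν⟫ = 0 → ∀ t, c < t → x + t • ν ∈ ball Q₀ r → x + t • ν ∈ Ω)
    (hminus : ∀ x, ⟪x - Q₀, ν⟫ = 0 → ∀ t, t < -c → x + t • ν ∈ ball Q₀ r → x + t • ν ∉ Ω)
    {x : E} (hx : ⟪x - Q₀, ν⟫ = 0) (hxs : ‖x - Q₀‖ ^ 2 + s ^ 2 < r ^ 2) :
    ∃ t, |t| ≤ c ∧ x + t • ν ∈ frontier Ω ∩ ball Q₀ r := by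
  have hball : ∀ t, |t| ≤ s → x + t • ν ∈ ball Q₀ r := fun t ht => by
    have : t ^ 2 ≤ s ^ 2 := sq_le_sq' (abs_le.1 ht).1 (abs_le.1 ht).2
    rw [mem_ball_iff_norm, ← sq_lt_sq₀ (norm_nonneg _) hr, norm_add_smul_sub_sq hν hx]
    linarith
  have hs : |s| ≤ s := (abs_of_pos (hc.trans_lt hcs)).le
  have hseg : IsPreconnected ((fun t : ℝ => x + t • ν) '' Set.Icc (-s) s) :=
    isPreconnected_Icc.image _ (by fun_prop)
  obtain ⟨_, ⟨t, ht, rfl⟩, htΩ⟩ := hseg.inter_frontier_nonempty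
    ⟨x + s • ν, ⟨s, ⟨by linarith, le_rfl⟩, rfl⟩, hplus x hx s hcs (hball s hs)⟩
    ⟨x + (-s) • ν, ⟨-s, ⟨le_rfl, by linarith⟩, rfl⟩,
      hminus x hx (-s) (by linarith) (hball (-s) (by rwa [abs_neg]))⟩
  have htr := hball t (abs_le.2 ht)
  exact ⟨t, inner_add_smul_sub hν hx t ▸ abs_inner_le_of_mem_frontier hν hplus hminus htΩ htr,
    htΩ, htr⟩

theorem exists_linearIsometry_inner_eq_zero {n : ℕ} [Fact (Module.finrank ℝ E = n + 1)]
    (hν : ν ≠ 0) : ∃ g : EuclideanSpace ℝ (Fin n) →ₗᵢ[ℝ] E, ∀ z, ⟪g z, ν⟫ = 0 :=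
  ⟨(ℝ ∙ ν)ᗮ.subtypeₗᵢ.comp
      (OrthonormalBasis.fromOrthogonalSpanSingleton n hν).repr.symm.toLinearIsometry,
    fun _ => real_inner_comm ν _ ▸
      Submodule.mem_orthogonal_singleton_iff_inner_right.1 (Subtype.property _)⟩

theorem ofReal_pow_mul_omegaBall_le_hausdorffMeasure [MeasurableSpace E] [BorelSpace E] {n : ℕ}
    [Fact (Module.finrank ℝ E = n + 1)] (hν : ‖ν‖ = 1) {A : Set E} {ρ : ℝ} (hρ : 0 < ρ)
    (hA : {x | ⟪x - Q₀, ν⟫ = 0 ∧ ‖x - Q₀‖ < ρ} ⊆ (fun y => y - ⟪y - Q₀, ν⟫ • ν) '' A) :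
    ENNReal.ofReal (ρ ^ n * omegaBall n) ≤ μH[n] A := by
  obtain ⟨g, hg⟩ :=
    exists_linearIsometry_inner_eq_zero (n := n) (norm_ne_zero_iff.1 (hν ▸ one_ne_zero))
  have hf : Isometry fun z => Q₀ + g z := (IsometryEquiv.addLeft Q₀).isometry.comp g.isometry
  have hdisk : (fun z => Q₀ + g z) '' ball 0 ρ ⊆ (fun y => y - ⟪y - Q₀, ν⟫ • ν) '' A := by
    rintro _ ⟨z, hz, rfl⟩
    exact hA ⟨by simp [hg], by simpa using hz⟩
  calc ENNReal.ofReal (ρ ^ n * omegaBall n) = volume (ball (0 : EuclideanSpace ℝ (Fin n)) ρ) :=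
        (volume_ball_eq_ofReal_pow_mul_omegaBall n 0 hρ).symm
    _ ≤ μH[n] (ball (0 : EuclideanSpace ℝ (Fin n)) ρ) := by
        simpa using EuclideanSpace.volume_le_hausdorffMeasure
          (ball (0 : EuclideanSpace ℝ (Fin n)) ρ)
    _ = μH[n] ((fun z => Q₀ + g z) '' ball 0 ρ) :=
        (hf.hausdorffMeasure_image (Or.inl (Nat.cast_nonneg n)) _).symm
    _ ≤ μH[n] ((fun y => y - ⟪y - Q₀, ν⟫ • ν) '' A) := measure_mono hdisk
    _ ≤ μH[n] A := by
        simpa only [ENNReal.coe_one, ENNReal.one_rpow, one_mul] using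
          (lipschitzWith_sub_inner_smul hν Q₀).hausdorffMeasure_image_le (Nat.cast_nonneg n) A

end Plane

theorem stmt16_general (n : ℕ) (Ω : Set (EuclideanSpace ℝ (Fin (n+1))))
    (Q₀ : EuclideanSpace ℝ (Fin (n+1)))
    (r δ : ℝ) (hr : 0 < r) (hδ : δ ∈ Set.Ioo (0 : ℝ) (1/8))
    (ν : EuclideanSpace ℝ (Fin (n+1))) (hν : ‖ν‖ = 1)
    -- L is the n-plane through Q₀ with unit normal ν; the part of B(r,Q₀) above height 2δr
    -- lies in Ω and the part below height −2δr lies in the complement of Ω: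
    (hplus : ∀ x : EuclideanSpace ℝ (Fin (n+1)), ⟪x - Q₀, ν⟫ = 0 → ∀ t : ℝ,
      2 * δ * r < t → x + t • ν ∈ ball Q₀ r → x + t • ν ∈ Ω)
    (hminus : ∀ x : EuclideanSpace ℝ (Fin (n+1)), ⟪x - Q₀, ν⟫ = 0 → ∀ t : ℝ,
      t < -(2 * δ * r) → x + t • ν ∈ ball Q₀ r → x + t • ν ∉ Ω) :
    -- (i) each point of L close enough to Q₀ is within 2δr of the boundary in the ν direction
    (∀ x : EuclideanSpace ℝ (Fin (n+1)), ⟪x - Q₀, ν⟫ = 0 →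
      ‖x - Q₀‖ < r * Real.sqrt (1 - 16 * δ ^ 2) →
      ∃ t : ℝ, |t| ≤ 2 * δ * r ∧ x + t • ν ∈ frontier Ω) ∧
    -- (ii) the projection of ∂Ω ∩ B(r,Q₀) onto L contains the corresponding disk
    ({x : EuclideanSpace ℝ (Fin (n+1)) |
        ⟪x - Q₀, ν⟫ = 0 ∧ ‖x - Q₀‖ < r * Real.sqrt (1 - 16 * δ ^ 2)} ⊆
      (fun y => y - ⟪y - Q₀, ν⟫ • ν) '' (frontier Ω ∩ ball Q₀ r)) ∧
    -- (iii) the Hausdorff measure lower bound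
    ENNReal.ofReal ((1 - 16 * δ ^ 2) ^ ((n : ℝ) / 2) * omegaBall n * r ^ n) ≤
      μH[(n : ℝ)] (frontier Ω ∩ ball Q₀ r) := by
  obtain ⟨hδ0, hδ8⟩ := hδ
  have h16 : 0 < 1 - 16 * δ ^ 2 := by nlinarith
  have hsegment : ∀ x, ⟪x - Q₀, ν⟫ = 0 → ‖x - Q₀‖ < r * √(1 - 16 * δ ^ 2) →
      ∃ t, |t| ≤ 2 * δ * r ∧ x + t • ν ∈ frontier Ω ∩ ball Q₀ r := by
    intro x hx hxρ
    have hx2 : ‖x - Q₀‖ ^ 2 < r ^ 2 * (1 - 16 * δ ^ 2) := by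
      simpa [mul_pow, Real.sq_sqrt h16.le] using pow_lt_pow_left₀ hxρ (norm_nonneg _) two_ne_zero
    exact exists_add_smul_mem_frontier hν hr.le (by positivity) (s := 3 * δ * r) (by nlinarith)
      hplus hminus hx (by nlinarith)
  have hproj : {x | ⟪x - Q₀, ν⟫ = 0 ∧ ‖x - Q₀‖ < r * √(1 - 16 * δ ^ 2)} ⊆
      (fun y => y - ⟪y - Q₀, ν⟫ • ν) '' (frontier Ω ∩ ball Q₀ r) := by
    rintro x ⟨hx, hxρ⟩
    obtain ⟨t, -, hmem⟩ := hsegment x hx hxρ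
    exact ⟨_, hmem, by simp [inner_add_smul_sub hν hx]⟩
  refine ⟨fun x hx hxρ => (hsegment x hx hxρ).imp fun _ ht => ⟨ht.1, ht.2.1⟩, hproj, ?_⟩
  have : Fact (Module.finrank ℝ (EuclideanSpace ℝ (Fin (n + 1))) = n + 1) :=
    ⟨finrank_euclideanSpace_fin⟩
  rw [Real.rpow_div_two_eq_sqrt _ h16.le, Real.rpow_natCast, mul_right_comm, ← mul_pow,
    mul_comm (√_)]
  exact ofReal_pow_mul_omegaBall_le_hausdorffMeasure hν (by positivity) hproj

theorem stmt16 (n : ℕ) (Ω : Set (EuclideanSpace ℝ (Fin (n+1)))) (hΩ : IsOpen Ω)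
    (Q₀ : EuclideanSpace ℝ (Fin (n+1))) (hQ₀ : Q₀ ∈ frontier Ω)
    (r δ : ℝ) (hr : 0 < r) (hδ : δ ∈ Set.Ioo (0 : ℝ) (1/8))
    (ν : EuclideanSpace ℝ (Fin (n+1))) (hν : ‖ν‖ = 1)
    -- L is the n-plane through Q₀ with unit normal ν; the part of B(r,Q₀) above height 2δr
    -- lies in Ω and the part below height −2δr lies in the complement of Ω:
    (hplus : ∀ x : EuclideanSpace ℝ (Fin (n+1)), ⟪x - Q₀, ν⟫ = 0 → ∀ t : ℝ,
      2 * δ * r < t → x + t • ν ∈ ball Q₀ r → x + t • ν ∈ Ω)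
    (hminus : ∀ x : EuclideanSpace ℝ (Fin (n+1)), ⟪x - Q₀, ν⟫ = 0 → ∀ t : ℝ,
      t < -(2 * δ * r) → x + t • ν ∈ ball Q₀ r → x + t • ν ∉ Ω) :
    -- (i) each point of L close enough to Q₀ is within 2δr of the boundary in the ν direction
    (∀ x : EuclideanSpace ℝ (Fin (n+1)), ⟪x - Q₀, ν⟫ = 0 →
      ‖x - Q₀‖ < r * Real.sqrt (1 - 16 * δ ^ 2) →
      ∃ t : ℝ, |t| ≤ 2 * δ * r ∧ x + t • ν ∈ frontier Ω) ∧
    -- (ii) the projection of ∂Ω ∩ B(r,Q₀) onto L contains the corresponding disk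
    ({x : EuclideanSpace ℝ (Fin (n+1)) |
        ⟪x - Q₀, ν⟫ = 0 ∧ ‖x - Q₀‖ < r * Real.sqrt (1 - 16 * δ ^ 2)} ⊆
      (fun y => y - ⟪y - Q₀, ν⟫ • ν) '' (frontier Ω ∩ ball Q₀ r)) ∧
    -- (iii) the Hausdorff measure lower bound
    ENNReal.ofReal ((1 - 16 * δ ^ 2) ^ ((n : ℝ) / 2) * omegaBall n * r ^ n) ≤
      μH[(n : ℝ)] (frontier Ω ∩ ball Q₀ r) :=
  stmt16_general n Ω Q₀ r δ hr hδ ν hν hplus hminus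
end
end
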